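/- For positive integers j and m with j ≤ m, ∑_{k=1}^{m} (⌊m/(jk)⌋ − 2⌊m/(2jk)⌋) μ(k) equals −1 if j ≤ m/2, and equals 1 if m/2 < j ≤ m. -/

import Mathlib

open ArithmeticFunction Finset
open scoped ArithmeticFunction.Moebius ArithmeticFunction.zeta

lemma helper (N n : ℕ) (hn : n ≤ N) :
    ∑ k ∈ Finset.Icc 1 N, ((n / k : ℕ) : ℤ) * μ k = if 1 ≤ n then 1 else 0 := by
  have key : ∀ k, ((n / k : ℕ) : ℤ) = ∑ i ∈ (Finset.Ioc 0 n).filter (k ∣ ·), (1 : ℤ) := by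
    intro k
    rw [Finset.sum_const, nsmul_eq_mul, mul_one, Nat.Ioc_filter_dvd_card_eq_div]
  simp_rw [key, Finset.sum_mul, one_mul]
  rw [Finset.sum_comm' (t' := Finset.Ioc 0 n)
    (s' := fun i => (Finset.Icc 1 N).filter (· ∣ i))]
  · have : ∀ i ∈ Finset.Ioc 0 n, ∑ k ∈ (Finset.Icc 1 N).filter (· ∣ i), (μ k : ℤ)
        = if i = 1 then 1 else 0 := by
      intro i hi
      simp only [Finset.mem_Ioc] at hi
      have : (Finset.Icc 1 N).filter (· ∣ i) = i.divisors := by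
        ext d
        simp only [Finset.mem_filter, Finset.mem_Icc, Nat.mem_divisors]
        constructor
        · rintro ⟨⟨h1, h2⟩, h3⟩; exact ⟨h3, by omega⟩
        · rintro ⟨h1, h2⟩
          have hd : 0 < d := Nat.pos_of_dvd_of_pos h1 (by omega)
          exact ⟨⟨hd, le_trans (Nat.le_of_dvd (by omega) h1) (le_trans hi.2 hn)⟩, h1⟩
      rw [this]
      have h2 : ((μ * ζ : ArithmeticFunction ℤ)) i = ∑ d ∈ i.divisors, μ d := by
        rw [ArithmeticFunction.coe_mul_zeta_apply]
      rw [← h2, ArithmeticFunction.moebius_mul_coe_zeta, ArithmeticFunction.one_apply]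
    rw [Finset.sum_congr rfl this]
    simp only [Finset.sum_ite_eq', Finset.mem_Ioc]
    by_cases h : 1 ≤ n <;> simp [h]
  · intro x y
    simp only [Finset.mem_Icc, Finset.mem_Ioc, Finset.mem_filter]
    tauto

/-- For positive integers `j ≤ m`,
`∑_{k=1}^m (⌊m/(jk)⌋ − 2⌊m/(2jk)⌋) μ(k)` equals `-1` if `2j ≤ m`
and equals `1` if `m < 2j` (and `j ≤ m`). -/
theorem sum_floor_diff_moebius (j m : ℕ) (hj : 0 < j) (hjm : j ≤ m) :
    ∑ k ∈ Finset.Icc 1 m,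
        (((m / (j * k) : ℕ) : ℤ) - 2 * ((m / (2 * j * k) : ℕ) : ℤ)) * μ k =
      if 2 * j ≤ m then -1 else 1 := by
  have e1 : ∀ k, m / (j * k) = (m / j) / k := fun k => (Nat.div_div_eq_div_mul m j k).symm
  have e2 : ∀ k, m / (2 * j * k) = (m / (2 * j)) / k := fun k =>
    (Nat.div_div_eq_div_mul m (2 * j) k).symm
  simp_rw [e1, e2, sub_mul, mul_assoc]
  rw [Finset.sum_sub_distrib, ← Finset.mul_sum,
    helper m (m / j) (Nat.div_le_self m j),
    helper m (m / (2 * j)) (Nat.div_le_self m (2 * j))]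
  have h1 : 1 ≤ m / j := Nat.one_le_div_iff hj |>.mpr hjm
  by_cases h : 2 * j ≤ m
  · have : 1 ≤ m / (2 * j) := Nat.one_le_div_iff (by omega) |>.mpr h
    simp [h, h1, this]
  · have : ¬ 1 ≤ m / (2 * j) := by
      rw [Nat.one_le_div_iff (by omega)]; exact h
    simp [h, h1, this]
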